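/- arXiv:2403.14899 — 4 statements merged into one kernel-verified Lean document; each statement's English description precedes it below -/
import Mathlib

section
/- Let n, m, r be positive integers, L an n×r real matrix, F an m×r real matrix, e an n×m real matrix, and set W = L·Fᵀ + e. Then for every n×r real matrix U whose columns are orthonormal (UᵀU = I_r), one has tr(Uᵀ W Wᵀ U) ≤ ‖L Fᵀ‖_F² + r·‖e‖² + 2·√r·‖e‖·‖L Fᵀ‖_F. -/
open Matrix

/-!
Write `A = L Fᵀ`. The trace is `‖Wᵀ U‖_F²`, and `‖Wᵀ U‖_F ≤ ‖Aᵀ U‖_F + ‖eᵀ U‖_F`. Both terms are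
controlled by the mixed bound `‖B C‖_F ≤ ‖B‖ ‖C‖_F`, obtained column by column: a matrix with
orthonormal columns has spectral norm at most `1` and Frobenius norm `√r`, so
`‖Aᵀ U‖_F = ‖Uᵀ A‖_F ≤ ‖A‖_F` and `‖eᵀ U‖_F ≤ √r ‖e‖`. Squaring gives the claim.
-/

/-- Frobenius norm of a real matrix. -/
noncomputable def frobNorm {n m : ℕ} (A : Matrix (Fin n) (Fin m) ℝ) : ℝ :=
  Real.sqrt (∑ i, ∑ j, (A i j) ^ 2)

/-- Spectral (ℓ²→ℓ² operator) norm of a real matrix. -/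
noncomputable def specNorm {n m : ℕ} (A : Matrix (Fin n) (Fin m) ℝ) : ℝ :=
  ‖LinearMap.toContinuousLinearMap (Matrix.toEuclideanLin A)‖

theorem frobNorm_nonneg {n m : ℕ} (A : Matrix (Fin n) (Fin m) ℝ) : 0 ≤ frobNorm A :=
  Real.sqrt_nonneg _

section Frobenius

attribute [local instance] Matrix.frobeniusNormedAddCommGroup

theorem frobNorm_eq_norm {n m : ℕ} (A : Matrix (Fin n) (Fin m) ℝ) : frobNorm A = ‖A‖ := by
  simp only [frobNorm, frobenius_norm_def, Real.norm_eq_abs, Real.rpow_two, sq_abs,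
    Real.sqrt_eq_rpow, one_div]

theorem frobNorm_add_le {n m : ℕ} (A B : Matrix (Fin n) (Fin m) ℝ) :
    frobNorm (A + B) ≤ frobNorm A + frobNorm B := by
  simpa only [frobNorm_eq_norm] using norm_add_le A B

theorem frobNorm_transpose {n m : ℕ} (A : Matrix (Fin n) (Fin m) ℝ) :
    frobNorm Aᵀ = frobNorm A := by
  simp only [frobNorm_eq_norm, frobenius_norm_transpose]

end Frobenius

theorem frobNorm_sq {n m : ℕ} (A : Matrix (Fin n) (Fin m) ℝ) :
    frobNorm A ^ 2 = ∑ i, ∑ j, A i j ^ 2 :=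
  Real.sq_sqrt <| Finset.sum_nonneg fun _ _ => Finset.sum_nonneg fun _ _ => sq_nonneg _

theorem trace_transpose_mul_self_eq_frobNorm_sq {n m : ℕ} (A : Matrix (Fin n) (Fin m) ℝ) :
    trace (Aᵀ * A) = frobNorm A ^ 2 := by
  rw [frobNorm_sq, Finset.sum_comm]
  simp only [trace, diag, mul_apply, transpose_apply, sq]

theorem frobNorm_sq_eq_sum_norm_col_sq {n m : ℕ} (A : Matrix (Fin n) (Fin m) ℝ) :
    frobNorm A ^ 2 = ∑ j, ‖(WithLp.toLp 2 (Aᵀ j) : EuclideanSpace ℝ (Fin n))‖ ^ 2 := by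
  rw [frobNorm_sq, Finset.sum_comm]
  simp only [EuclideanSpace.norm_sq_eq, Real.norm_eq_abs, sq_abs, transpose_apply]

section L2Operator

open scoped Matrix.Norms.L2Operator

theorem specNorm_eq_norm {n m : ℕ} (A : Matrix (Fin n) (Fin m) ℝ) : specNorm A = ‖A‖ := rfl

theorem specNorm_nonneg {n m : ℕ} (A : Matrix (Fin n) (Fin m) ℝ) : 0 ≤ specNorm A :=
  norm_nonneg _

theorem specNorm_transpose {n m : ℕ} (A : Matrix (Fin n) (Fin m) ℝ) :
    specNorm Aᵀ = specNorm A := by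
  simpa only [specNorm_eq_norm, conjTranspose_eq_transpose_of_trivial] using
    l2_opNorm_conjTranspose A

theorem norm_mulVec_le_specNorm_mul {n m : ℕ} (A : Matrix (Fin n) (Fin m) ℝ)
    (x : EuclideanSpace ℝ (Fin m)) :
    ‖(WithLp.toLp 2 (A *ᵥ x) : EuclideanSpace ℝ (Fin n))‖ ≤ specNorm A * ‖x‖ :=
  l2_opNorm_mulVec A x

theorem specNorm_le_one_of_transpose_mul_self_eq_one {n r : ℕ} {U : Matrix (Fin n) (Fin r) ℝ}
    (hU : Uᵀ * U = 1) : specNorm U ≤ 1 := by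
  have hsq : specNorm U * specNorm U ≤ 1 := by
    rw [specNorm_eq_norm, ← l2_opNorm_conjTranspose_mul_self, conjTranspose_eq_transpose_of_trivial,
      hU, ← l2_opNorm_toEuclideanCLM, map_one]
    exact ContinuousLinearMap.norm_id_le
  nlinarith [specNorm_nonneg U]

end L2Operator

theorem frobNorm_mul_le_specNorm_mul {n m k : ℕ} (B : Matrix (Fin n) (Fin m) ℝ)
    (C : Matrix (Fin m) (Fin k) ℝ) : frobNorm (B * C) ≤ specNorm B * frobNorm C := by
  have hcol : ∀ j, (B * C)ᵀ j = B *ᵥ Cᵀ j := fun j => by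
    ext i; simp only [transpose_apply, mul_apply, mulVec, dotProduct]
  have hsq : frobNorm (B * C) ^ 2 ≤ (specNorm B * frobNorm C) ^ 2 := by
    rw [mul_pow, frobNorm_sq_eq_sum_norm_col_sq, frobNorm_sq_eq_sum_norm_col_sq, Finset.mul_sum]
    refine Finset.sum_le_sum fun j _ => ?_
    rw [hcol, ← mul_pow]
    exact pow_le_pow_left₀ (norm_nonneg _) (norm_mulVec_le_specNorm_mul B _) 2
  exact le_of_pow_le_pow_left₀ two_ne_zero
    (mul_nonneg (specNorm_nonneg B) (frobNorm_nonneg C)) hsq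

section Orthonormal

variable {n r : ℕ} {U : Matrix (Fin n) (Fin r) ℝ}

theorem frobNorm_eq_sqrt_of_transpose_mul_self_eq_one (hU : Uᵀ * U = 1) :
    frobNorm U = Real.sqrt r := by
  rw [← Real.sqrt_sq (frobNorm_nonneg U), ← trace_transpose_mul_self_eq_frobNorm_sq, hU,
    trace_one, Fintype.card_fin]

theorem frobNorm_transpose_mul_le_of_transpose_mul_self_eq_one (hU : Uᵀ * U = 1)
    {k : ℕ} (A : Matrix (Fin n) (Fin k) ℝ) : frobNorm (Aᵀ * U) ≤ frobNorm A :=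
  calc frobNorm (Aᵀ * U) = frobNorm (Uᵀ * A) := by
        rw [← frobNorm_transpose, transpose_mul, transpose_transpose]
    _ ≤ specNorm U * frobNorm A := by
        simpa only [specNorm_transpose] using frobNorm_mul_le_specNorm_mul Uᵀ A
    _ ≤ frobNorm A :=
        mul_le_of_le_one_left (frobNorm_nonneg A) (specNorm_le_one_of_transpose_mul_self_eq_one hU)

theorem frobNorm_mul_le_of_transpose_mul_self_eq_one (hU : Uᵀ * U = 1)
    {k : ℕ} (B : Matrix (Fin k) (Fin n) ℝ) : frobNorm (B * U) ≤ Real.sqrt r * specNorm B := by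
  simpa only [frobNorm_eq_sqrt_of_transpose_mul_self_eq_one hU, mul_comm] using
    frobNorm_mul_le_specNorm_mul B U

end Orthonormal

theorem stmt0_general (n m r : ℕ)
    (L : Matrix (Fin n) (Fin r) ℝ) (F : Matrix (Fin m) (Fin r) ℝ)
    (e : Matrix (Fin n) (Fin m) ℝ) (W : Matrix (Fin n) (Fin m) ℝ)
    (hW : W = L * Fᵀ + e)
    (U : Matrix (Fin n) (Fin r) ℝ) (hU : Uᵀ * U = 1) :
    Matrix.trace (Uᵀ * W * Wᵀ * U) ≤
      frobNorm (L * Fᵀ) ^ 2 + (r : ℝ) * specNorm e ^ 2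
        + 2 * Real.sqrt r * specNorm e * frobNorm (L * Fᵀ) := by
  have htrace : trace (Uᵀ * W * Wᵀ * U) = frobNorm (Wᵀ * U) ^ 2 := by
    rw [← trace_transpose_mul_self_eq_frobNorm_sq, transpose_mul, transpose_transpose,
      Matrix.mul_assoc, Matrix.mul_assoc]
  have hbound : frobNorm (Wᵀ * U) ≤ frobNorm (L * Fᵀ) + Real.sqrt r * specNorm e :=
    calc frobNorm (Wᵀ * U) ≤ frobNorm ((L * Fᵀ)ᵀ * U) + frobNorm (eᵀ * U) := by
          rw [hW, transpose_add, Matrix.add_mul]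
          exact frobNorm_add_le _ _
      _ ≤ frobNorm (L * Fᵀ) + Real.sqrt r * specNorm e := by
          gcongr
          · exact frobNorm_transpose_mul_le_of_transpose_mul_self_eq_one hU _
          · simpa only [specNorm_transpose] using
              frobNorm_mul_le_of_transpose_mul_self_eq_one hU eᵀ
  have hr : Real.sqrt r ^ 2 = r := Real.sq_sqrt r.cast_nonneg
  calc trace (Uᵀ * W * Wᵀ * U) ≤ (frobNorm (L * Fᵀ) + Real.sqrt r * specNorm e) ^ 2 := by
        rw [htrace]
        exact pow_le_pow_left₀ (frobNorm_nonneg _) hbound 2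
    _ = _ := by rw [add_sq, mul_pow, hr]; ring

theorem stmt0 (n m r : ℕ) (hn : 0 < n) (hm : 0 < m) (hr : 0 < r)
    (L : Matrix (Fin n) (Fin r) ℝ) (F : Matrix (Fin m) (Fin r) ℝ)
    (e : Matrix (Fin n) (Fin m) ℝ) (W : Matrix (Fin n) (Fin m) ℝ)
    (hW : W = L * Fᵀ + e)
    (U : Matrix (Fin n) (Fin r) ℝ) (hU : Uᵀ * U = 1) :
    Matrix.trace (Uᵀ * W * Wᵀ * U) ≤
      frobNorm (L * Fᵀ) ^ 2 + (r : ℝ) * specNorm e ^ 2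
        + 2 * Real.sqrt r * specNorm e * frobNorm (L * Fᵀ) :=
  stmt0_general n m r L F e W hW U hU
end

section
/- Let (Ω, 𝒜, P) be a probability space, 𝒢 ⊆ 𝒜 a sub-σ-algebra, ξ : Ω → ℝ a random variable with ξ ∈ {0,1} almost surely, and let π be a 𝒢-measurable version of E[ξ | 𝒢]. Let V : Ω → ℝ^d be a 𝒢-measurable random vector with E[‖V‖²] < ∞. Then for every a ∈ ℝ^d, Var(⟨a, ξ·V⟩) − Var(⟨a, π·V⟩) = E[π·(1 − π)·⟨a, V⟩²] ≥ 0; in particular the variance of every linear functional of ξ·V is at least the variance of the corresponding linear functional of π·V. -/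
open MeasureTheory ProbabilityTheory
open scoped RealInnerProductSpace

theorem stmt5 {Ω : Type*} (G : MeasurableSpace Ω) {mΩ : MeasurableSpace Ω} (P : Measure Ω) [IsProbabilityMeasure P]
    (hG : G ≤ mΩ)
    (ξ : Ω → ℝ) (hξmeas : Measurable ξ) (hξ01 : ∀ᵐ ω ∂P, ξ ω = 0 ∨ ξ ω = 1)
    (π : Ω → ℝ) (hπmeas : Measurable[G] π) (hπ : π =ᵐ[P] P[ξ|G])
    (d : ℕ) (V : Ω → EuclideanSpace ℝ (Fin d))
    (hVmeas : Measurable[G] V) (hV2 : MemLp V 2 P) :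
    ∀ a : EuclideanSpace ℝ (Fin d),
      variance (fun ω => ⟪a, ξ ω • V ω⟫) P - variance (fun ω => ⟪a, π ω • V ω⟫) P =
          ∫ ω, π ω * (1 - π ω) * ⟪a, V ω⟫ ^ 2 ∂P ∧
        variance (fun ω => ⟪a, π ω • V ω⟫) P ≤ variance (fun ω => ⟪a, ξ ω • V ω⟫) P := by
  intro a
  set f : Ω → ℝ := fun ω => ⟪a, V ω⟫ with hf_def
  -- basic measurability
  have hfmeasG : Measurable[G] f := Measurable.inner (measurable_const) hVmeas
  have hfmeas : Measurable[mΩ] f := hfmeasG.mono (ma' := mΩ) hG le_rfl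
  have hπmeas' : Measurable[mΩ] π := hπmeas.mono (ma' := mΩ) hG le_rfl
  have hξmeas' : Measurable[mΩ] ξ := hξmeas.mono (ma' := mΩ) le_rfl le_rfl
  have hfSM : StronglyMeasurable[G] f := hfmeasG.stronglyMeasurable
  -- f is in L²
  have hfL2 : MemLp f 2 P := hV2.const_inner a
  have hf2int : Integrable (fun ω => f ω ^ 2) P := by
    have := hfL2.integrable_sq
    simpa using this
  have hfint : Integrable f P := hfL2.integrable one_le_two
  -- bounds on ξ and π
  have hξbd : ∀ᵐ ω ∂P, ‖ξ ω‖ ≤ 1 := by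
    filter_upwards [hξ01] with ω h
    rcases h with h | h <;> simp [h]
  have hξint : Integrable ξ P :=
    Integrable.mono' (integrable_const 1) hξmeas'.aestronglyMeasurable hξbd
  have hπ0 : ∀ᵐ ω ∂P, 0 ≤ π ω := by
    have h0 : (0 : Ω → ℝ) ≤ᵐ[P] P[ξ|G] :=
      condExp_nonneg (by filter_upwards [hξ01] with ω h; rcases h with h | h <;> simp [h])
    filter_upwards [hπ, h0] with ω h1 h2
    rw [h1]; exact h2
  have hπ1 : ∀ᵐ ω ∂P, π ω ≤ 1 := by
    have h1 : P[ξ|G] ≤ᵐ[P] P[(fun _ => (1:ℝ))|G] :=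
      condExp_mono hξint (integrable_const 1)
        (by filter_upwards [hξ01] with ω h; rcases h with h | h <;> simp [h])
    have h2 : P[(fun _ => (1:ℝ))|G] = fun _ => (1:ℝ) := condExp_const hG 1
    filter_upwards [hπ, h1] with ω hω1 hω2
    rw [hω1]; calc (P[ξ|G]) ω ≤ (P[(fun _ => (1:ℝ))|G]) ω := hω2
      _ = 1 := by rw [h2]
  have hπbd : ∀ᵐ ω ∂P, ‖π ω‖ ≤ 1 := by
    filter_upwards [hπ0, hπ1] with ω h0 h1
    rw [Real.norm_eq_abs, abs_of_nonneg h0]; exact h1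
  -- rewrite the inner products
  have hrw1 : (fun ω => ⟪a, ξ ω • V ω⟫) = fun ω => ξ ω * f ω := by
    funext ω; exact real_inner_smul_right a (V ω) (ξ ω)
  have hrw2 : (fun ω => ⟪a, π ω • V ω⟫) = fun ω => π ω * f ω := by
    funext ω; exact real_inner_smul_right a (V ω) (π ω)
  rw [hrw1, hrw2]
  -- Memℒp of the two products
  have hξfL2 : MemLp (fun ω => ξ ω * f ω) 2 P := by
    refine hfL2.mono (hξmeas'.mul hfmeas).aestronglyMeasurable ?_
    filter_upwards [hξbd] with ω h
    rw [Real.norm_eq_abs, abs_mul]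
    calc |ξ ω| * |f ω| ≤ 1 * |f ω| :=
          mul_le_mul_of_nonneg_right (by simpa using h) (abs_nonneg _)
      _ = ‖f ω‖ := by rw [one_mul, Real.norm_eq_abs]
  have hπfL2 : MemLp (fun ω => π ω * f ω) 2 P := by
    refine hfL2.mono (hπmeas'.mul hfmeas).aestronglyMeasurable ?_
    filter_upwards [hπbd] with ω h
    rw [Real.norm_eq_abs, abs_mul]
    calc |π ω| * |f ω| ≤ 1 * |f ω| :=
          mul_le_mul_of_nonneg_right (by simpa using h) (abs_nonneg _)
      _ = ‖f ω‖ := by rw [one_mul, Real.norm_eq_abs]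
  -- integrabilities of products with f²
  have hξf2int : Integrable (fun ω => ξ ω * f ω ^ 2) P := by
    refine hf2int.mono' ((hξmeas'.mul (hfmeas.pow_const 2)).aestronglyMeasurable) ?_
    filter_upwards [hξbd] with ω h
    rw [Real.norm_eq_abs, abs_mul]
    calc |ξ ω| * |f ω ^ 2| ≤ 1 * |f ω ^ 2| :=
          mul_le_mul_of_nonneg_right (by simpa using h) (abs_nonneg _)
      _ = f ω ^ 2 := by rw [one_mul, abs_of_nonneg (sq_nonneg _)]
  have hπf2int : Integrable (fun ω => π ω * f ω ^ 2) P := by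
    refine hf2int.mono' ((hπmeas'.mul (hfmeas.pow_const 2)).aestronglyMeasurable) ?_
    filter_upwards [hπbd] with ω h
    rw [Real.norm_eq_abs, abs_mul]
    calc |π ω| * |f ω ^ 2| ≤ 1 * |f ω ^ 2| :=
          mul_le_mul_of_nonneg_right (by simpa using h) (abs_nonneg _)
      _ = f ω ^ 2 := by rw [one_mul, abs_of_nonneg (sq_nonneg _)]
  have hπ2f2int : Integrable (fun ω => π ω ^ 2 * f ω ^ 2) P := by
    refine hf2int.mono' (((hπmeas'.pow_const 2).mul (hfmeas.pow_const 2)).aestronglyMeasurable) ?_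
    filter_upwards [hπbd] with ω h
    rw [Real.norm_eq_abs, abs_mul]
    have h2 : |π ω ^ 2| ≤ 1 := by
      rw [abs_of_nonneg (sq_nonneg _)]
      calc π ω ^ 2 = |π ω| ^ 2 := (sq_abs _).symm
        _ ≤ 1 ^ 2 := by gcongr; simpa using h
        _ = 1 := one_pow 2
    calc |π ω ^ 2| * |f ω ^ 2| ≤ 1 * |f ω ^ 2| :=
          mul_le_mul_of_nonneg_right h2 (abs_nonneg _)
      _ = f ω ^ 2 := by rw [one_mul, abs_of_nonneg (sq_nonneg _)]
  have hξfint : Integrable (fun ω => ξ ω * f ω) P := hξfL2.integrable one_le_two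
  have hπfint : Integrable (fun ω => π ω * f ω) P := hπfL2.integrable one_le_two
  -- pull-out: E[g·ξ] = E[g·π] for G-measurable g with g·ξ integrable
  have key : ∀ g : Ω → ℝ, StronglyMeasurable[G] g → Integrable (fun ω => g ω * ξ ω) P →
      ∫ ω, g ω * ξ ω ∂P = ∫ ω, g ω * π ω ∂P := by
    intro g hgSM hgξint
    have h1 : P[fun ω => g ω * ξ ω|G] =ᵐ[P] fun ω => g ω * (P[ξ|G]) ω := by
      have := condExp_mul_of_stronglyMeasurable_left hgSM (by exact hgξint) hξint
      exact this
    calc ∫ ω, g ω * ξ ω ∂P = ∫ ω, (P[fun ω => g ω * ξ ω|G]) ω ∂P :=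
          (integral_condExp hG).symm
      _ = ∫ ω, g ω * (P[ξ|G]) ω ∂P := integral_congr_ae h1
      _ = ∫ ω, g ω * π ω ∂P := integral_congr_ae (by
            filter_upwards [hπ] with ω h; rw [h])
  -- equal means
  have hmean : ∫ ω, ξ ω * f ω ∂P = ∫ ω, π ω * f ω ∂P := by
    have := key f hfSM (by simpa [mul_comm] using hξfint)
    calc ∫ ω, ξ ω * f ω ∂P = ∫ ω, f ω * ξ ω ∂P := by simp_rw [mul_comm]
      _ = ∫ ω, f ω * π ω ∂P := this
      _ = ∫ ω, π ω * f ω ∂P := by simp_rw [mul_comm]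
  -- second moment identity for ξ
  have hsq : ∫ ω, (ξ ω * f ω) ^ 2 ∂P = ∫ ω, π ω * f ω ^ 2 ∂P := by
    have hf2SM : StronglyMeasurable[G] (fun ω => f ω ^ 2) :=
      (hfmeasG.pow_const 2).stronglyMeasurable
    have hk := key (fun ω => f ω ^ 2) hf2SM (by simpa [mul_comm] using hξf2int)
    have h1 : ∫ ω, (ξ ω * f ω) ^ 2 ∂P = ∫ ω, f ω ^ 2 * ξ ω ∂P := by
      refine integral_congr_ae ?_
      filter_upwards [hξ01] with ω h
      rcases h with h | h <;> simp [h]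
    rw [h1, hk]; simp_rw [mul_comm]
  -- variance formulas
  have hvξ : variance (fun ω => ξ ω * f ω) P =
      ∫ ω, π ω * f ω ^ 2 ∂P - (∫ ω, π ω * f ω ∂P) ^ 2 := by
    have e1 : (fun ω => ξ ω * f ω) ^ 2 = fun ω => (ξ ω * f ω) ^ 2 := by
      funext ω; simp
    rw [variance_eq_sub hξfL2, e1, hsq, hmean]
  have hvπ : variance (fun ω => π ω * f ω) P =
      ∫ ω, π ω ^ 2 * f ω ^ 2 ∂P - (∫ ω, π ω * f ω ∂P) ^ 2 := by
    have e2 : (fun ω => π ω * f ω) ^ 2 = fun ω => π ω ^ 2 * f ω ^ 2 := by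
      funext ω; simp [mul_pow]
    rw [variance_eq_sub hπfL2, e2]
  have hdiff : variance (fun ω => ξ ω * f ω) P - variance (fun ω => π ω * f ω) P =
      ∫ ω, π ω * (1 - π ω) * f ω ^ 2 ∂P := by
    rw [hvξ, hvπ]
    have : ∫ ω, π ω * (1 - π ω) * f ω ^ 2 ∂P =
        ∫ ω, (π ω * f ω ^ 2 - π ω ^ 2 * f ω ^ 2) ∂P := by
      refine integral_congr_ae (Filter.Eventually.of_forall fun ω => ?_)
      ring
    rw [this, integral_sub hπf2int hπ2f2int]
    ring
  refine ⟨hdiff, ?_⟩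
  have hnn : 0 ≤ ∫ ω, π ω * (1 - π ω) * f ω ^ 2 ∂P := by
    refine integral_nonneg_of_ae ?_
    filter_upwards [hπ0, hπ1] with ω h0 h1
    have : 0 ≤ π ω * (1 - π ω) := mul_nonneg h0 (by linarith)
    exact mul_nonneg this (sq_nonneg _)
  linarith [hdiff.symm ▸ hnn]
end

section
/- Let Σ be an r×r real symmetric positive definite matrix, let H be an r×k real matrix with k ≤ r such that HᵀΣH is invertible, let S be an r×r real symmetric matrix, and let c ≥ 0 be such that S − c·Σ⁻¹ is positive semidefinite. Then tr[ (Σ − Σ·H·(HᵀΣH)⁻¹·Hᵀ·Σ) · S ] ≥ (r − k)·c. -/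
/-!
`A = H(HᵀΣH)⁻¹HᵀΣ` is idempotent, so `Σ - ΣH(HᵀΣH)⁻¹HᵀΣ = (1 - A)ᵀΣ(1 - A)` is positive
semidefinite, while `tr[(Σ - ΣH(HᵀΣH)⁻¹HᵀΣ) Σ⁻¹] = r - k` because by cyclicity
`tr[ΣH(HᵀΣH)⁻¹Hᵀ] = tr[HᵀΣH(HᵀΣH)⁻¹] = k`.
Splitting `S = (S - cΣ⁻¹) + cΣ⁻¹`, the first part contributes a nonnegative trace, being the
trace of a product of two positive semidefinite matrices, and the second contributes `(r - k) c`.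
-/

namespace Matrix

variable {n m : Type*} [Fintype n] [Fintype m] [DecidableEq m]

section RCLike

variable {𝕜 : Type*} [RCLike 𝕜]

open scoped ComplexOrder

open scoped MatrixOrder in
theorem PosSemidef.trace_mul_nonneg {A B : Matrix n n 𝕜} (hA : A.PosSemidef)
    (hB : B.PosSemidef) : 0 ≤ (A * B).trace := by
  classical
  obtain ⟨X, rfl⟩ := CStarAlgebra.nonneg_iff_eq_star_mul_self.mp hB.nonneg
  rw [star_eq_conjTranspose, ← mul_assoc, trace_mul_cycle]
  exact (hA.mul_mul_conjTranspose_same X).trace_nonneg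

theorem sub_mul_mul_eq_conjTranspose_mul_mul [DecidableEq n] {S Q : Matrix n n 𝕜}
    (hS : S.IsHermitian) (hQ : Q.IsHermitian) (hQS : IsIdempotentElem (Q * S)) :
    S - S * Q * S = (1 - Q * S)ᴴ * S * (1 - Q * S) := by
  rw [conjTranspose_sub, conjTranspose_one, conjTranspose_mul, hS.eq, hQ.eq]
  calc S - S * Q * S = S - S * Q * S - S * Q * S + S * (Q * S * (Q * S)) := by
        rw [hQS.eq, ← mul_assoc]; abel
    _ = (1 - S * Q) * S * (1 - Q * S) := by noncomm_ring

theorem isHermitian_mul_inv_mul_conjTranspose {S : Matrix n n 𝕜} (hS : S.IsHermitian)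
    (H : Matrix n m 𝕜) : (H * (Hᴴ * S * H)⁻¹ * Hᴴ).IsHermitian := by
  simp only [IsHermitian, conjTranspose_mul, conjTranspose_nonsing_inv, hS.eq,
    conjTranspose_conjTranspose, Matrix.mul_assoc]

theorem isIdempotentElem_mul_inv_mul_conjTranspose_mul {S : Matrix n n 𝕜} {H : Matrix n m 𝕜}
    (hH : IsUnit (Hᴴ * S * H)) : IsIdempotentElem (H * (Hᴴ * S * H)⁻¹ * Hᴴ * S) := by
  have hGG : Hᴴ * S * H * (Hᴴ * S * H)⁻¹ = 1 :=
    mul_nonsing_inv _ ((isUnit_iff_isUnit_det _).mp hH)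
  calc _ = H * (Hᴴ * S * H)⁻¹ * (Hᴴ * S * H * (Hᴴ * S * H)⁻¹) * Hᴴ * S := by
        simp only [Matrix.mul_assoc]
    _ = _ := by rw [hGG, Matrix.mul_one]

theorem PosSemidef.sub_mul_inv_mul {S : Matrix n n 𝕜} (hS : S.PosSemidef)
    {H : Matrix n m 𝕜} (hH : IsUnit (Hᴴ * S * H)) :
    (S - S * H * (Hᴴ * S * H)⁻¹ * Hᴴ * S).PosSemidef := by
  classical
  have hM := sub_mul_mul_eq_conjTranspose_mul_mul hS.isHermitian
    (isHermitian_mul_inv_mul_conjTranspose hS.isHermitian H)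
    (isIdempotentElem_mul_inv_mul_conjTranspose_mul hH)
  simp only [← Matrix.mul_assoc] at hM
  rw [hM]
  exact hS.conjTranspose_mul_mul_same _

end RCLike

theorem trace_sub_mul_inv_mul_mul_inv [DecidableEq n] {K : Type*} [Field K] {S : Matrix n n K}
    (hS : IsUnit S) {H : Matrix n m K} {P : Matrix m n K} (hH : IsUnit (P * S * H)) :
    ((S - S * H * (P * S * H)⁻¹ * P * S) * S⁻¹).trace =
      (Fintype.card n : K) - Fintype.card m := by
  have hSS : S * S⁻¹ = 1 := mul_nonsing_inv _ ((isUnit_iff_isUnit_det _).mp hS)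
  have hGG : P * S * H * (P * S * H)⁻¹ = 1 := mul_nonsing_inv _ ((isUnit_iff_isUnit_det _).mp hH)
  rw [sub_mul, hSS, mul_assoc _ S, hSS, mul_one, trace_sub, trace_mul_comm _ P]
  simp only [← Matrix.mul_assoc, hGG, trace_one]

end Matrix

open Matrix

theorem stmt7_general (r k : ℕ)
    (S : Matrix (Fin r) (Fin r) ℝ) (hS : S.PosDef)
    (H : Matrix (Fin r) (Fin k) ℝ) (hH : IsUnit (Hᵀ * S * H))
    (T : Matrix (Fin r) (Fin r) ℝ)
    (c : ℝ) (hTc : (T - c • S⁻¹).PosSemidef) :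
    ((r : ℝ) - (k : ℝ)) * c ≤
      Matrix.trace ((S - S * H * (Hᵀ * S * H)⁻¹ * Hᵀ * S) * T) := by
  set M := S - S * H * (Hᵀ * S * H)⁻¹ * Hᵀ * S
  have hM : M.PosSemidef := hS.posSemidef.sub_mul_inv_mul hH
  have htrace : (M * S⁻¹).trace = (r : ℝ) - k := by
    simpa using trace_sub_mul_inv_mul_mul_inv hS.isUnit hH
  have hsplit : (M * T).trace = (M * (T - c • S⁻¹)).trace + c * (M * S⁻¹).trace := by
    rw [Matrix.mul_sub, trace_sub, Matrix.mul_smul, trace_smul, smul_eq_mul]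
    ring
  rw [hsplit, htrace]
  linarith [hM.trace_mul_nonneg hTc]

theorem stmt7 (r k : ℕ) (hk : k ≤ r)
    (S : Matrix (Fin r) (Fin r) ℝ) (hS : S.PosDef)
    (H : Matrix (Fin r) (Fin k) ℝ) (hH : IsUnit (Hᵀ * S * H))
    (T : Matrix (Fin r) (Fin r) ℝ) (hT : T.IsHermitian)
    (c : ℝ) (hc : 0 ≤ c) (hTc : (T - c • S⁻¹).PosSemidef) :
    ((r : ℝ) - (k : ℝ)) * c ≤
      Matrix.trace ((S - S * H * (Hᵀ * S * H)⁻¹ * Hᵀ * S) * T) :=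
  stmt7_general r k S hS H hH T c hTc
end

section
/- Let n, m, r be positive integers, let L̂ be an n×r real matrix with L̂ᵀ·L̂ = n·I_r, let H be an invertible r×r real matrix, and let L (n×r), F (m×r), e (n×m) be real matrices. Set W = L·Fᵀ + e, Δ_L = L̂ − L·H, and Γ̂ = n⁻¹·L̂·L̂ᵀ·W. Then Γ̂ − L·Fᵀ = (I_n − n⁻¹·L̂·L̂ᵀ)·Δ_L·H⁻¹·Fᵀ + n⁻¹·L̂·L̂ᵀ·e. -/
open Matrix

theorem stmt12 (n m r : ℕ) (hn : 0 < n) (hm : 0 < m) (hr : 0 < r)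
    (Lhat L : Matrix (Fin n) (Fin r) ℝ)
    (H : Matrix (Fin r) (Fin r) ℝ) (hH : IsUnit H)
    (F : Matrix (Fin m) (Fin r) ℝ) (e W : Matrix (Fin n) (Fin m) ℝ)
    (hLhat : Lhatᵀ * Lhat = (n : ℝ) • (1 : Matrix (Fin r) (Fin r) ℝ))
    (hW : W = L * Fᵀ + e)
    (ΔL : Matrix (Fin n) (Fin r) ℝ) (hΔL : ΔL = Lhat - L * H)
    (Γhat : Matrix (Fin n) (Fin m) ℝ)
    (hΓ : Γhat = (n : ℝ)⁻¹ • (Lhat * Lhatᵀ * W)) :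
    Γhat - L * Fᵀ =
      (1 - (n : ℝ)⁻¹ • (Lhat * Lhatᵀ)) * (ΔL * H⁻¹ * Fᵀ)
        + (n : ℝ)⁻¹ • (Lhat * Lhatᵀ * e) := by
  have hn' : (n : ℝ) ≠ 0 := Nat.cast_ne_zero.mpr hn.ne'
  have hHinv : H * H⁻¹ = 1 :=
    Matrix.mul_nonsing_inv H ((Matrix.isUnit_iff_isUnit_det H).mp hH)
  have hP : ((n : ℝ)⁻¹ • (Lhat * Lhatᵀ)) * Lhat = Lhat := by
    rw [Matrix.smul_mul, Matrix.mul_assoc, hLhat, Matrix.mul_smul, Matrix.mul_one,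
      smul_smul, inv_mul_cancel₀ hn', one_smul]
  subst hW hΔL hΓ
  have h1 : (Lhat - L * H) * H⁻¹ * Fᵀ = Lhat * (H⁻¹ * Fᵀ) - L * Fᵀ := by
    rw [Matrix.sub_mul, Matrix.sub_mul, Matrix.mul_assoc L H, hHinv, Matrix.mul_one,
      Matrix.mul_assoc]
  have h2 : ((n : ℝ)⁻¹ • (Lhat * Lhatᵀ)) * (Lhat * (H⁻¹ * Fᵀ)) = Lhat * (H⁻¹ * Fᵀ) := by
    rw [← Matrix.mul_assoc, hP]
  have h3 : (n : ℝ)⁻¹ • (Lhat * Lhatᵀ * (L * Fᵀ)) =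
      ((n : ℝ)⁻¹ • (Lhat * Lhatᵀ)) * (L * Fᵀ) := by
    rw [Matrix.smul_mul]
  rw [h1, Matrix.mul_sub, Matrix.sub_mul, Matrix.sub_mul, Matrix.one_mul, Matrix.one_mul,
    h2, Matrix.mul_add, smul_add, h3]
  abel
end
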